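/- Let Φ be the m×n adjacency matrix of a (k,ε)-unbalanced expander with left degree d. Then for every k-sparse vector x ∈ ℝ^n, ‖Φx‖₁ ≥ (1−2ε)·d·‖x‖₁. -/

import Mathlib

/-!
Rank the coordinates by a permutation `σ` along which `|x i|` decreases, and call an edge
`(i, j)` a collision when `j` has a neighbour ranked before `i`. Every right vertex receives at
most one non-colliding edge, so `|(Φx)_j|` is at least the `|x i|` of that edge minus the `|x i|`
of the colliding ones; summing over `j` gives `‖Φx‖₁ ≥ d‖x‖₁ - 2 ∑_{collisions} |x i|`.
For a prefix `P` of the support, the non-colliding edges out of `P` biject onto `N(P)`, so `P`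
emits `d|P| - |N(P)| ≤ εd|P|` collisions. As `|x|` decreases along the ranking, Abel summation
turns these prefix bounds into `∑_{collisions} |x i| ≤ εd‖x‖₁`.
-/

open scoped Classical

open Finset

theorem sum_abs_sub_sum_abs_le_abs_sum {ι : Type*} [DecidableEq ι] {s t : Finset ι}
    (hts : t ⊆ s) (ht : #t ≤ 1) (f : ι → ℝ) :
    ∑ i ∈ t, |f i| - ∑ i ∈ s \ t, |f i| ≤ |∑ i ∈ s, f i| := by
  have habs : |∑ i ∈ t, f i| = ∑ i ∈ t, |f i| := by
    rcases Nat.le_one_iff_eq_zero_or_eq_one.mp ht with h | h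
    · simp [card_eq_zero.mp h]
    · obtain ⟨i, rfl⟩ := card_eq_one.mp h
      simp
  rw [← habs, ← sum_sdiff hts]
  calc |∑ i ∈ t, f i| - ∑ i ∈ s \ t, |f i|
      ≤ |∑ i ∈ t, f i| - |∑ i ∈ s \ t, f i| := by gcongr; exact abs_sum_le_sum_abs f _
    _ ≤ |∑ i ∈ s \ t, f i + ∑ i ∈ t, f i| := by
      rw [add_comm]; exact abs_sub_abs_le_abs_add _ _

theorem sum_comp_eq_sum_card_mul {ι κ : Type*} [Fintype κ] [DecidableEq κ] (s : Finset ι)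
    (g : ι → κ) (f : κ → ℝ) : ∑ i ∈ s, f (g i) = ∑ j, #{i ∈ s | g i = j} * f j := by
  simp [← sum_fiberwise' s g f, sum_const]

theorem sum_eq_sum_sum_filter_mem {α β : Type*} [Fintype α] [Fintype β] [DecidableEq α]
    [DecidableEq β] (E : Finset (α × β)) (g : α × β → ℝ) :
    ∑ e ∈ E, g e = ∑ j, ∑ i with (i, j) ∈ E, g (i, j) :=
  sum_finset_product_right E univ _ (by simp)

theorem card_filter_fst_mem_eq_sum {α β : Type*} [DecidableEq α] (s : Finset (α × β))
    (P : Finset α) : #{e ∈ s | e.1 ∈ P} = ∑ i ∈ P, #{e ∈ s | e.1 = i} := by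
  rw [card_eq_sum_card_fiberwise (s := {e ∈ s | e.1 ∈ P}) (f := Prod.fst) (t := P)
    fun e he => (mem_filter.mp he).2]
  refine sum_congr rfl fun i hi => ?_
  rw [filter_filter]
  exact congrArg card (filter_congr fun e _ => ⟨fun h => h.2, fun h => ⟨h ▸ hi, h⟩⟩)

theorem Tuple.exists_perm_antitone {n : ℕ} {β : Type*} [LinearOrder β] (f : Fin n → β) :
    ∃ σ : Equiv.Perm (Fin n), ∀ i j, σ i ≤ σ j → f j ≤ f i := by
  refine ⟨(Tuple.sort (OrderDual.toDual ∘ f))⁻¹, fun i j h => ?_⟩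
  simpa using Tuple.monotone_sort (OrderDual.toDual ∘ f) h

section Abel

variable {ι γ : Type*} [DecidableEq ι] [LinearOrder γ] {ρ : ι → γ} {a b : ι → ℝ}

/-- Abel summation along the ranking `ρ`; the induction adds the top-ranked element and needs
the lower bound `m` of `a` to be free. -/
theorem sum_mul_le_mul_sum_of_prefix_sum_nonpos (hρ : Function.Injective ρ)
    (ha : ∀ i j, ρ i ≤ ρ j → a j ≤ a i) (T : Finset ι)
    (hb : ∀ i₀ ∈ T, ∑ i ∈ T with ρ i ≤ ρ i₀, b i ≤ 0) {m : ℝ} (hm : ∀ i ∈ T, m ≤ a i) :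
    ∑ i ∈ T, b i * a i ≤ m * ∑ i ∈ T, b i := by
  induction T using Finset.induction_on_max_value ρ generalizing m with
  | empty => simp
  | insert i₁ T hi₁ hmax ih =>
    have hprefix : ∀ i₀ ∈ T, {i ∈ insert i₁ T | ρ i ≤ ρ i₀} = {i ∈ T | ρ i ≤ ρ i₀} :=
      fun i₀ hi₀ => by
        rw [filter_insert, if_neg fun h => hi₁ (hρ (le_antisymm h (hmax i₀ hi₀)) ▸ hi₀)]
    have hsum : b i₁ + ∑ i ∈ T, b i ≤ 0 := by
      simpa [← sum_insert hi₁, filter_true_of_mem fun i hi => (mem_insert.mp hi).elim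
        (fun h => h ▸ le_rfl) (hmax i)] using hb i₁ (mem_insert_self _ _)
    have ih' : ∑ i ∈ T, b i * a i ≤ a i₁ * ∑ i ∈ T, b i :=
      ih (fun i₀ hi₀ => hprefix i₀ hi₀ ▸ hb i₀ (mem_insert_of_mem hi₀))
        (fun i hi => ha _ _ (hmax i hi))
    have hm₁ : m ≤ a i₁ := hm i₁ (mem_insert_self _ _)
    rw [sum_insert hi₁, sum_insert hi₁]
    nlinarith

theorem sum_mul_le_mul_sum_of_prefix_sum_le (hρ : Function.Injective ρ)
    (ha : ∀ i j, ρ i ≤ ρ j → a j ≤ a i) {T : Finset ι} (ha₀ : ∀ i ∈ T, 0 ≤ a i) {K : ℝ}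
    (hb : ∀ i₀ ∈ T, ∑ i ∈ T with ρ i ≤ ρ i₀, b i ≤ K * #{i ∈ T | ρ i ≤ ρ i₀}) :
    ∑ i ∈ T, b i * a i ≤ K * ∑ i ∈ T, a i := by
  have := sum_mul_le_mul_sum_of_prefix_sum_nonpos (b := fun i => b i - K) hρ ha T
    (fun i₀ hi₀ => by simpa [sum_sub_distrib, mul_comm] using hb i₀ hi₀) ha₀
  simpa [sub_mul, sum_sub_distrib, mul_sum] using this

end Abel

section Collisions

variable {α β γ : Type*} [LinearOrder γ] (E : Finset (α × β)) (ρ : α → γ)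

noncomputable def collisionEdges : Finset (α × β) := {e ∈ E | ∃ i, (i, e.2) ∈ E ∧ ρ i < ρ e.1}

theorem collisionEdges_subset : collisionEdges E ρ ⊆ E := filter_subset _ _

variable {E ρ} [DecidableEq α] [DecidableEq β]

theorem mem_sdiff_collisionEdges {e : α × β} :
    e ∈ E \ collisionEdges E ρ ↔ e ∈ E ∧ ∀ i, (i, e.2) ∈ E → ρ e.1 ≤ ρ i := by
  simp only [collisionEdges, mem_sdiff, mem_filter, not_and, not_exists, not_lt]
  exact ⟨fun h => ⟨h.1, h.2 h.1⟩, fun h => ⟨h.1, fun _ => h.2⟩⟩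

theorem injOn_snd_sdiff_collisionEdges (hρ : Function.Injective ρ) :
    Set.InjOn Prod.snd (↑(E \ collisionEdges E ρ) : Set (α × β)) := by
  intro e he e' he' h
  rw [mem_coe, mem_sdiff_collisionEdges] at he he'
  refine Prod.ext (hρ (le_antisymm (he.2 e'.1 ?_) (he'.2 e.1 ?_))) h
  · simpa [h] using he'.1
  · simpa [← h] using he.1

theorem image_snd_filter_sdiff_collisionEdges {P : Finset α}
    (hP : ∀ i ∈ P, ∀ i', ρ i' ≤ ρ i → i' ∈ P) :
    ({e ∈ E | e.1 ∈ P} \ collisionEdges E ρ).image Prod.snd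
      = {e ∈ E | e.1 ∈ P}.image Prod.snd := by
  refine (image_subset_image sdiff_subset).antisymm fun j hj => ?_
  obtain ⟨e, he, rfl⟩ := mem_image.mp hj
  rw [mem_filter] at he
  obtain ⟨e₀, he₀, hmin⟩ := exists_min_image {e' ∈ E | e'.2 = e.2} (fun e' => ρ e'.1)
    ⟨e, mem_filter.mpr ⟨he.1, rfl⟩⟩
  rw [mem_filter] at he₀
  have hfirst : e₀ ∈ E \ collisionEdges E ρ := mem_sdiff_collisionEdges.mpr
    ⟨he₀.1, fun i hi => hmin (i, e₀.2) (mem_filter.mpr ⟨hi, he₀.2⟩)⟩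
  have hP₀ : e₀.1 ∈ P := hP e.1 he.2 e₀.1 (hmin e (mem_filter.mpr ⟨he.1, rfl⟩))
  exact mem_image.mpr ⟨e₀, mem_sdiff.mpr ⟨mem_filter.mpr ⟨he₀.1, hP₀⟩,
    (mem_sdiff.mp hfirst).2⟩, he₀.2⟩

theorem card_filter_collisionEdges_add_card_image (hρ : Function.Injective ρ) {P : Finset α}
    (hP : ∀ i ∈ P, ∀ i', ρ i' ≤ ρ i → i' ∈ P) :
    #{e ∈ collisionEdges E ρ | e.1 ∈ P} + #({e ∈ E | e.1 ∈ P}.image Prod.snd)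
      = #{e ∈ E | e.1 ∈ P} := by
  rw [← image_snd_filter_sdiff_collisionEdges hP, card_image_of_injOn
    ((injOn_snd_sdiff_collisionEdges hρ).mono
      (coe_subset.mpr (sdiff_subset_sdiff (filter_subset _ E) subset_rfl))),
    add_comm, ← card_sdiff_add_card_inter {e ∈ E | e.1 ∈ P} (collisionEdges E ρ)]
  congr 2
  ext e
  have : e ∈ collisionEdges E ρ → e ∈ E := fun h => collisionEdges_subset E ρ h
  simp only [mem_filter, mem_inter]
  tauto

theorem sum_abs_sub_two_mul_sum_collisionEdges_le [Fintype α] [Fintype β]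
    (hρ : Function.Injective ρ) (f : α → ℝ) :
    ∑ e ∈ E, |f e.1| - 2 * ∑ e ∈ collisionEdges E ρ, |f e.1|
      ≤ ∑ j, |∑ i with (i, j) ∈ E, f i| := by
  have hcolumn : ∀ j, ∑ i with (i, j) ∈ E \ collisionEdges E ρ, |f i|
      - ∑ i with (i, j) ∈ collisionEdges E ρ, |f i| ≤ |∑ i with (i, j) ∈ E, f i| := by
    intro j
    have hsub : ({i | (i, j) ∈ E \ collisionEdges E ρ} : Finset α)
        ⊆ ({i | (i, j) ∈ E} : Finset α) :=
      monotone_filter_right _ fun _ _ h => (mem_sdiff.mp h).1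
    have hcard : #{i | (i, j) ∈ E \ collisionEdges E ρ} ≤ 1 :=
      card_le_one.mpr fun i hi i' hi' => congrArg Prod.fst
        (injOn_snd_sdiff_collisionEdges hρ (mem_filter.mp hi).2 (mem_filter.mp hi').2 rfl)
    convert sum_abs_sub_sum_abs_le_abs_sum hsub hcard f using 3
    ext i
    have : (i, j) ∈ collisionEdges E ρ → (i, j) ∈ E := fun h => collisionEdges_subset E ρ h
    simp only [mem_filter, mem_sdiff, mem_univ, true_and]
    tauto
  calc ∑ e ∈ E, |f e.1| - 2 * ∑ e ∈ collisionEdges E ρ, |f e.1|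
      = ∑ e ∈ E \ collisionEdges E ρ, |f e.1| - ∑ e ∈ collisionEdges E ρ, |f e.1| := by
        rw [sum_sdiff_eq_sub (collisionEdges_subset E ρ)]; ring
    _ = ∑ j, (∑ i with (i, j) ∈ E \ collisionEdges E ρ, |f i|
          - ∑ i with (i, j) ∈ collisionEdges E ρ, |f i|) := by
        rw [sum_sub_distrib, sum_eq_sum_sum_filter_mem, sum_eq_sum_sum_filter_mem]
    _ ≤ _ := sum_le_sum fun j _ => hcolumn j

end Collisions

section Expander

variable {α β : Type*} [Fintype α] [DecidableEq α] {E : Finset (α × β)} {d : ℕ}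

theorem sum_fst_eq_mul_sum (hdeg : ∀ i, #{e ∈ E | e.1 = i} = d) (f : α → ℝ) :
    ∑ e ∈ E, f e.1 = d * ∑ i, f i := by
  simp [sum_comp_eq_sum_card_mul E Prod.fst f, hdeg, mul_sum]

theorem sum_collisionEdges_le [DecidableEq β] {γ : Type*} [LinearOrder γ] {ρ : α → γ}
    {k : ℕ} {ε : ℝ} (hρ : Function.Injective ρ) (hdeg : ∀ i, #{e ∈ E | e.1 = i} = d)
    (hexp : ∀ X : Finset α, #X ≤ k →
      (1 - ε) * d * #X ≤ (#({e ∈ E | e.1 ∈ X}.image Prod.snd) : ℝ))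
    {x : α → ℝ} (hx : ∀ i i', ρ i ≤ ρ i' → |x i'| ≤ |x i|) (hsparse : #{i | x i ≠ 0} ≤ k) :
    ∑ e ∈ collisionEdges E ρ, |x e.1| ≤ ε * d * ∑ i, |x i| := by
  set S : Finset α := {i | x i ≠ 0}
  have hS : ∀ i ∈ S, ∀ i', ρ i' ≤ ρ i → i' ∈ S := by
    intro i hi i' h
    simp only [S, mem_filter, mem_univ, true_and] at hi ⊢
    intro h'
    have := hx _ _ h
    rw [h', abs_zero] at this
    exact hi (abs_nonpos_iff.mp this)
  have hsupp : ∀ g : α → ℝ, (∀ i, x i = 0 → g i = 0) → ∑ i ∈ S, g i = ∑ i, g i :=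
    fun g hg => sum_subset (subset_univ S) fun i _ hi => hg i (by simpa [S] using hi)
  rw [sum_comp_eq_sum_card_mul _ Prod.fst (fun i => |x i|),
    ← hsupp _ fun i hi => by simp [hi], ← hsupp _ fun i hi => by simp [hi]]
  refine sum_mul_le_mul_sum_of_prefix_sum_le hρ hx (fun i _ => abs_nonneg _) fun i₀ _ => ?_
  set P : Finset α := {i ∈ S | ρ i ≤ ρ i₀}
  have hP : ∀ i ∈ P, ∀ i', ρ i' ≤ ρ i → i' ∈ P := fun i hi i' h => by
    rw [mem_filter] at hi ⊢
    exact ⟨hS i hi.1 i' h, h.trans hi.2⟩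
  have hcount : (#{e ∈ collisionEdges E ρ | e.1 ∈ P} : ℝ)
      + #({e ∈ E | e.1 ∈ P}.image Prod.snd) = d * #P := by
    have hdegP : #{e ∈ E | e.1 ∈ P} = d * #P := by
      simp [card_filter_fst_mem_eq_sum, hdeg, mul_comm]
    exact_mod_cast hdegP ▸ card_filter_collisionEdges_add_card_image hρ hP
  have hexpP := hexp P ((card_le_card (filter_subset _ S)).trans hsparse)
  rw [← Nat.cast_sum, ← card_filter_fst_mem_eq_sum]
  linarith

end Expander

/-- If `Φ` is the adjacency matrix of a `(k,ε)`-unbalanced expander with left degree `d`,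
then for every `k`-sparse `x`, `‖Φx‖₁ ≥ (1−2ε)·d·‖x‖₁`. -/
theorem stmt4 (n m k d : ℕ) (ε : ℝ)
    (E : Finset (Fin n × Fin m))
    (hdeg : ∀ i : Fin n, (E.filter fun e => e.1 = i).card = d)
    (hexp : ∀ X : Finset (Fin n), X.card ≤ k →
      (1 - ε) * d * X.card ≤ (((E.filter fun e => e.1 ∈ X).image Prod.snd).card : ℝ))
    (Φ : Matrix (Fin m) (Fin n) ℝ)
    (hΦ : ∀ j i, Φ j i = if (i, j) ∈ E then 1 else 0)
    (x : Fin n → ℝ)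
    (hsparse : (Finset.univ.filter fun i => x i ≠ 0).card ≤ k) :
    (1 - 2 * ε) * d * ∑ i, |x i| ≤ ∑ j, |Φ.mulVec x j| := by
  obtain ⟨σ, hσ⟩ := Tuple.exists_perm_antitone fun i => |x i|
  have hΦx : ∀ j, Φ.mulVec x j = ∑ i with (i, j) ∈ E, x i := fun j => by
    simp [Matrix.mulVec, dotProduct, hΦ, sum_filter]
  have hlower := sum_abs_sub_two_mul_sum_collisionEdges_le (E := E) σ.injective x
  have hcollisions := sum_collisionEdges_le σ.injective hdeg hexp hσ hsparse
  rw [sum_fst_eq_mul_sum hdeg fun i => |x i|] at hlower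
  simp only [hΦx]
  linarith
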